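/- Let n ≥ 2, let A and B be Young functions with A finite-valued satisfying ∫_0 (t/A(t))^{1/(n−1)} dt < ∞ and ∫^∞ (t/A(t))^{1/(n−1)} dt = ∞, and let E : [0,∞) → [0,∞) be non-decreasing. Assume there exists t₀ ≥ 0 such that B(tE(H_n(t))) ≤ A(t) for all t ≥ t₀. Then there exists a constant c ≥ 0 such that B(E(s)·t/2) ≤ c + A_n(s) + A(t) for all s, t > 0. -/

import Mathlib

open MeasureTheory Filter Set Topology ENNReal NNReal RealInnerProductSpace

noncomputable section

/-- Euclidean space `ℝⁿ`. -/
abbrev En (n : ℕ) : Type := EuclideanSpace ℝ (Fin n)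

/-- A Young function: a convex, left-continuous function `A : [0,∞) → [0,∞]` with `A 0 = 0`,
not identically `0` and not identically `∞` on `(0,∞)`. -/
structure YoungFunction : Type where
  toFun : ℝ≥0 → ℝ≥0∞
  map_zero' : toFun 0 = 0
  convex' : ∀ s t a b : ℝ≥0, a + b = 1 →
    toFun (a * s + b * t) ≤ (a : ℝ≥0∞) * toFun s + (b : ℝ≥0∞) * toFun t
  leftContinuous' : ∀ t : ℝ≥0, Filter.Tendsto toFun (nhdsWithin t (Set.Iio t)) (nhds (toFun t))
  not_zero' : ∃ t : ℝ≥0, 0 < t ∧ toFun t ≠ 0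
  not_top' : ∃ t : ℝ≥0, 0 < t ∧ toFun t ≠ ⊤

instance : CoeFun YoungFunction fun _ => ℝ≥0 → ℝ≥0∞ := ⟨YoungFunction.toFun⟩

/-- A Young function is non-degenerate if `A t > 0` for all `t > 0`. -/
def YoungFunction.NonDegenerate (A : YoungFunction) : Prop :=
  ∀ t : ℝ≥0, 0 < t → A.toFun t ≠ 0

/-- The `Δ₂`-condition near zero. -/
def Delta2NearZero (A : ℝ≥0 → ℝ≥0∞) : Prop :=
  ∃ c : ℝ≥0, 1 ≤ c ∧ ∃ t₂ : ℝ≥0, 0 < t₂ ∧ ∀ t : ℝ≥0, t ≤ t₂ → A (2 * t) ≤ (c : ℝ≥0∞) * A t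

/-- Canonical extension of a function on `[0,∞)` to `[0,∞]`, sending `∞` to `∞`. -/
def extYF (A : ℝ≥0 → ℝ≥0∞) (t : ℝ≥0∞) : ℝ≥0∞ :=
  if t = ⊤ then ⊤ else A t.toNNReal

/-- The generalized right-continuous inverse `A⁻¹(t) = inf {s ≥ 0 : A s > t}`. -/
def rcInv (A : ℝ≥0 → ℝ≥0∞) (t : ℝ≥0∞) : ℝ≥0∞ :=
  sInf {s : ℝ≥0∞ | ∃ r : ℝ≥0, s = (r : ℝ≥0∞) ∧ t < A r}

/-- Canonical upper extension of a monotone function `E : [0,∞) → [0,∞)` to `[0,∞]`. -/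
def extE (E : ℝ≥0 → ℝ≥0) (t : ℝ≥0∞) : ℝ≥0∞ :=
  ⨆ (s : ℝ≥0) (_ : (s : ℝ≥0∞) ≤ t), (E s : ℝ≥0∞)

/-- The modular `∫ A(|u|/λ) dμ` associated with a Young function. -/
def modular {α : Type*} [MeasurableSpace α] (A : ℝ≥0 → ℝ≥0∞) (μ : Measure α)
    (lam : ℝ≥0) (u : α → ℝ) : ℝ≥0∞ :=
  ∫⁻ x, A (‖u x‖₊ / lam) ∂μ

/-- Membership in the Orlicz space `L^A(μ)`. -/
def MemLA {α : Type*} [MeasurableSpace α] (A : ℝ≥0 → ℝ≥0∞) (μ : Measure α) (u : α → ℝ) : Prop :=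
  AEMeasurable u μ ∧ ∃ lam : ℝ≥0, 0 < lam ∧ modular A μ lam u < ⊤

/-- Membership in the Orlicz heart `E^A(μ)`. -/
def MemEA {α : Type*} [MeasurableSpace α] (A : ℝ≥0 → ℝ≥0∞) (μ : Measure α) (u : α → ℝ) : Prop :=
  AEMeasurable u μ ∧ ∀ lam : ℝ≥0, 0 < lam → modular A μ lam u < ⊤

/-- The Luxemburg norm. -/
def luxNorm {α : Type*} [MeasurableSpace α] (A : ℝ≥0 → ℝ≥0∞) (μ : Measure α) (u : α → ℝ) : ℝ≥0∞ :=
  sInf {l : ℝ≥0∞ | ∃ lam : ℝ≥0, 0 < lam ∧ l = (lam : ℝ≥0∞) ∧ modular A μ lam u ≤ 1}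

/-- The `L^∞` norm (essential supremum of the absolute value). -/
def linftyN {α : Type*} [MeasurableSpace α] (μ : Measure α) (u : α → ℝ) : ℝ≥0∞ :=
  essSup (fun x => (‖u x‖₊ : ℝ≥0∞)) μ

/-- `V` is the weak gradient of `u` on the open set `Ω ⊆ ℝⁿ`. -/
def IsWeakGradOn {n : ℕ} (Ω : Set (En n)) (u : En n → ℝ) (V : En n → En n) : Prop :=
  LocallyIntegrableOn u Ω volume ∧ LocallyIntegrableOn (fun x => ‖V x‖) Ω volume ∧
  ∀ φ : En n → ℝ, ContDiff ℝ (⊤ : ℕ∞) φ → HasCompactSupport φ → tsupport φ ⊆ Ω →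
    ∀ y : En n, (∫ x in Ω, u x * (fderiv ℝ φ x y)) = - ∫ x in Ω, (inner ℝ (V x) y : ℝ) * φ x

/-- Membership in the Orlicz–Sobolev space `W^{1,A}(Ω)`, with weak gradient `V`. -/
def MemW1A {n : ℕ} (A : ℝ≥0 → ℝ≥0∞) (Ω : Set (En n)) (u : En n → ℝ) (V : En n → En n) : Prop :=
  IsWeakGradOn Ω u V ∧ MemLA A (volume.restrict Ω) u ∧
    MemLA A (volume.restrict Ω) (fun x => ‖V x‖)

/-- The norm of `W^{1,A}(Ω)`. -/
def normW1A {n : ℕ} (A : ℝ≥0 → ℝ≥0∞) (Ω : Set (En n)) (u : En n → ℝ) (V : En n → En n) : ℝ≥0∞ :=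
  luxNorm A (volume.restrict Ω) u + luxNorm A (volume.restrict Ω) (fun x => ‖V x‖)

/-- Extension of `u` by `0` outside `Ω`. -/
def hatFn {n : ℕ} (Ω : Set (En n)) (u : En n → ℝ) : En n → ℝ := Ω.indicator u

/-- Membership in the homogeneous Orlicz–Sobolev space `V₀^{1,A}(Ω)`, with weak gradient `V`
of the extension by zero. -/
def MemV01 {n : ℕ} (A : ℝ≥0 → ℝ≥0∞) (Ω : Set (En n)) (u : En n → ℝ) (V : En n → En n) : Prop :=
  IsWeakGradOn (Set.univ) (hatFn Ω u) V ∧ MemLA A volume (fun x => ‖V x‖) ∧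
  ∀ t : ℝ, 0 < t → volume {x : En n | t < |hatFn Ω u x|} < ⊤

/-- Modular convergence in `W^{1,A}(Ω)` with constant `lam`. -/
def ModConvW1 {n : ℕ} (A : ℝ≥0 → ℝ≥0∞) (Ω : Set (En n)) (lam : ℝ≥0)
    (u : ℕ → En n → ℝ) (V : ℕ → En n → En n) (u₀ : En n → ℝ) (V₀ : En n → En n) : Prop :=
  Tendsto (fun k => modular A (volume.restrict Ω) lam (fun x => u k x - u₀ x)) atTop (𝓝 0) ∧
  Tendsto (fun k => modular A (volume.restrict Ω) lam (fun x => ‖V k x - V₀ x‖)) atTop (𝓝 0)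

/-- Modular convergence of gradients in `V₀^{1,A}(Ω)` with constant `lam`. -/
def ModConvV0 {n : ℕ} (A : ℝ≥0 → ℝ≥0∞) (lam : ℝ≥0)
    (V : ℕ → En n → En n) (V₀ : En n → En n) : Prop :=
  Tendsto (fun k => modular A volume lam (fun x => ‖V k x - V₀ x‖)) atTop (𝓝 0)

/-- `T_f` maps `W^{1,A}(Ω)` into `W^{1,B}(Ω)` and is continuous in the modular topology. -/
def MapsModCont {n : ℕ} (A B : ℝ≥0 → ℝ≥0∞) (Ω : Set (En n)) (f : ℝ → ℝ) : Prop :=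
  (∀ u V, MemW1A A Ω u V → ∃ W, MemW1A B Ω (fun x => f (u x)) W) ∧
  ∀ (u : ℕ → En n → ℝ) (V : ℕ → En n → En n) (u₀ : En n → ℝ) (V₀ : En n → En n),
    (∀ k, MemW1A A Ω (u k) (V k)) → MemW1A A Ω u₀ V₀ →
    (∃ lam : ℝ≥0, 0 < lam ∧ ModConvW1 A Ω lam u V u₀ V₀) →
    ∃ (W : ℕ → En n → En n) (W₀ : En n → En n),
      (∀ k, MemW1A B Ω (fun x => f (u k x)) (W k)) ∧
      MemW1A B Ω (fun x => f (u₀ x)) W₀ ∧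
      ∃ lam : ℝ≥0, 0 < lam ∧
        ModConvW1 B Ω lam (fun k x => f (u k x)) W (fun x => f (u₀ x)) W₀

/-- `T_f` maps `V₀^{1,A}(Ω)` into `V₀^{1,B}(Ω)` and is continuous in the modular topology. -/
def MapsModContV0 {n : ℕ} (A B : ℝ≥0 → ℝ≥0∞) (Ω : Set (En n)) (f : ℝ → ℝ) : Prop :=
  (∀ u V, MemV01 A Ω u V → ∃ W, MemV01 B Ω (fun x => f (u x)) W) ∧
  ∀ (u : ℕ → En n → ℝ) (V : ℕ → En n → En n) (u₀ : En n → ℝ) (V₀ : En n → En n),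
    (∀ k, MemV01 A Ω (u k) (V k)) → MemV01 A Ω u₀ V₀ →
    (∃ lam : ℝ≥0, 0 < lam ∧ ModConvV0 A lam V V₀) →
    ∃ (W : ℕ → En n → En n) (W₀ : En n → En n),
      (∀ k, MemV01 B Ω (fun x => f (u k x)) (W k)) ∧
      MemV01 B Ω (fun x => f (u₀ x)) W₀ ∧
      ∃ lam : ℝ≥0, 0 < lam ∧ ModConvV0 B lam W W₀

/-- The integrand `(t/A(t))^{1/(σ-1)}` of the Sobolev-conjugate construction. -/
def integrandA (A : ℝ≥0 → ℝ≥0∞) (σ : ℝ) (t : ℝ) : ℝ≥0∞ :=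
  (ENNReal.ofReal t / A t.toNNReal) ^ ((1 : ℝ) / (σ - 1))

/-- Convergence of `∫^∞ (t/A(t))^{1/(σ-1)} dt` near infinity. -/
def ConvAtTop (A : ℝ≥0 → ℝ≥0∞) (σ : ℝ) : Prop :=
  ∃ c : ℝ, 0 < c ∧ ∫⁻ t in Set.Ioi c, integrandA A σ t < ⊤

/-- Divergence of `∫^∞ (t/A(t))^{1/(σ-1)} dt` near infinity. -/
def DivAtTop (A : ℝ≥0 → ℝ≥0∞) (σ : ℝ) : Prop :=
  ∀ c : ℝ, 0 < c → ∫⁻ t in Set.Ioi c, integrandA A σ t = ⊤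

/-- Convergence of `∫_0 (t/A(t))^{1/(σ-1)} dt` near zero. -/
def ConvAtZero (A : ℝ≥0 → ℝ≥0∞) (σ : ℝ) : Prop :=
  ∃ c : ℝ, 0 < c ∧ ∫⁻ t in Set.Ioo 0 c, integrandA A σ t < ⊤

/-- The function `H_σ(s) = (∫_0^s (t/A(t))^{1/(σ-1)} dt)^{1/σ'}`. -/
def Hn (A : ℝ≥0 → ℝ≥0∞) (σ : ℝ) (s : ℝ) : ℝ :=
  ((∫⁻ t in Set.Ioo 0 s, integrandA A σ t) ^ ((σ - 1) / σ)).toReal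

open scoped Classical in
/-- The Sobolev conjugate `A_σ(t) = A(H_σ⁻¹(t))`, with value `∞` when `t` exceeds `sup H_σ`. -/
def SobConj (A : ℝ≥0 → ℝ≥0∞) (σ : ℝ) (t : ℝ≥0) : ℝ≥0∞ :=
  if ({s : ℝ | 0 ≤ s ∧ (t : ℝ) ≤ Hn A σ s}).Nonempty then
    A (Real.toNNReal (sInf {s : ℝ | 0 ≤ s ∧ (t : ℝ) ≤ Hn A σ s}))
  else ⊤

/-- Equivalence of Young functions near infinity. -/
def EquivNearInfty (A B : ℝ≥0 → ℝ≥0∞) : Prop :=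
  ∃ c : ℝ≥0, 0 < c ∧ ∃ t₀ : ℝ≥0, 0 < t₀ ∧ ∀ t : ℝ≥0, t₀ ≤ t →
    B (t / c) ≤ A t ∧ A t ≤ B (c * t)

/-- The divergence of a smooth vector field on `ℝⁿ`. -/
def divergence {n : ℕ} (φ : En n → En n) (x : En n) : ℝ :=
  ∑ i, fderiv ℝ φ x (EuclideanSpace.single i (1 : ℝ)) i

/-- The perimeter of `G` relative to `Ω`, defined by duality with smooth vector fields. -/
def relPerimeter {n : ℕ} (G Ω : Set (En n)) : ℝ≥0∞ :=
  ⨆ (φ : En n → En n) (_ : ContDiff ℝ (⊤ : ℕ∞) φ ∧ HasCompactSupport φ ∧ tsupport φ ⊆ Ω ∧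
      ∀ x, ‖φ x‖ ≤ 1), ENNReal.ofReal (∫ x in G, divergence φ x)

/-- The class `𝒢_{1/σ'}` of open sets of finite measure supporting a relative isoperimetric
inequality with exponent `1/σ' = (σ-1)/σ`. -/
def MemGClass {n : ℕ} (Ω : Set (En n)) (σ : ℝ) : Prop :=
  IsOpen Ω ∧ volume Ω < ⊤ ∧ ∃ c : ℝ≥0, 0 < c ∧
    ∀ G : Set (En n), G ⊆ Ω → MeasurableSet G →
      (c : ℝ≥0∞) * (min (volume G) (volume (Ω \ G))) ^ ((σ - 1) / σ) ≤ relPerimeter G Ω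

/-- The `W^{1,1}` norm of a pair (function, gradient) on `Ω`. -/
def normW11 {n : ℕ} (Ω : Set (En n)) (u : En n → ℝ) (V : En n → En n) : ℝ≥0∞ :=
  (∫⁻ x in Ω, (‖u x‖₊ : ℝ≥0∞)) + ∫⁻ x in Ω, (‖V x‖₊ : ℝ≥0∞)

/-- The `W^{1,∞}` norm of a pair (function, gradient) on `Ω`. -/
def normW1inf {n : ℕ} (Ω : Set (En n)) (u : En n → ℝ) (V : En n → En n) : ℝ≥0∞ :=
  essSup (fun x => (‖u x‖₊ : ℝ≥0∞)) (volume.restrict Ω) +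
    essSup (fun x => (‖V x‖₊ : ℝ≥0∞)) (volume.restrict Ω)

/-- `Ω` is an extension domain: there is a linear extension operator bounded from
`W^{1,1}(Ω)` to `W^{1,1}(ℝⁿ)` and from `W^{1,∞}(Ω)` to `W^{1,∞}(ℝⁿ)`. -/
def IsExtensionDomain {n : ℕ} (Ω : Set (En n)) : Prop :=
  IsOpen Ω ∧ ∃ Ext : (En n → ℝ) →ₗ[ℝ] (En n → ℝ),
    (∀ u : En n → ℝ, Set.EqOn (Ext u) u Ω) ∧
    ∃ C : ℝ≥0∞,
      (∀ u V, IsWeakGradOn Ω u V → normW11 Ω u V < ⊤ →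
        ∃ W, IsWeakGradOn (Set.univ) (Ext u) W ∧
          normW11 (Set.univ) (Ext u) W ≤ C * normW11 Ω u V) ∧
      (∀ u V, IsWeakGradOn Ω u V → normW1inf Ω u V < ⊤ →
        ∃ W, IsWeakGradOn (Set.univ) (Ext u) W ∧
          normW1inf (Set.univ) (Ext u) W ≤ C * normW1inf Ω u V)

/-- The a.e. derivative bound `|f'(t)| ≤ κ E(κ|t|)`. -/
def DerivBound (f : ℝ → ℝ) (κ : ℝ≥0) (E : ℝ≥0 → ℝ≥0) : Prop :=
  ∀ᵐ t : ℝ, ∀ d : ℝ, HasDerivAt f d t →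
    |d| ≤ ((κ * E (κ * Real.toNNReal |t|) : ℝ≥0) : ℝ)

/-- An `n`-dimensional Young function: convex, even, lower semicontinuous,
finite near `0`, vanishing at `0` and tending to `∞` at infinity. -/
structure YoungFunctionN (n : ℕ) : Type where
  toFun : En n → ℝ≥0∞
  map_zero' : toFun 0 = 0
  convex' : ∀ ξ η : En n, ∀ a b : ℝ, 0 ≤ a → 0 ≤ b → a + b = 1 →
    toFun (a • ξ + b • η) ≤ ENNReal.ofReal a * toFun ξ + ENNReal.ofReal b * toFun η
  even' : ∀ ξ : En n, toFun (-ξ) = toFun ξ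
  lsc' : LowerSemicontinuous toFun
  finite_near_zero' : ∃ ε : ℝ, 0 < ε ∧ ∀ ξ : En n, ‖ξ‖ < ε → toFun ξ < ⊤
  tendsto_top' : Tendsto toFun (Bornology.cobounded (En n)) (𝓝 ⊤)

instance {n : ℕ} : CoeFun (YoungFunctionN n) fun _ => En n → ℝ≥0∞ := ⟨YoungFunctionN.toFun⟩

/-- A non-degenerate `n`-dimensional Young function. -/
def YoungFunctionN.NonDegenerate {n : ℕ} (Φ : YoungFunctionN n) : Prop :=
  ∀ ξ : En n, ξ ≠ 0 → Φ.toFun ξ ≠ 0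

/-- The vector-valued modular `∫ Φ(U/λ) dμ`. -/
def modularV {n : ℕ} (Φ : YoungFunctionN n) (μ : Measure (En n)) (lam : ℝ≥0)
    (U : En n → En n) : ℝ≥0∞ :=
  ∫⁻ x, Φ.toFun (((lam : ℝ))⁻¹ • U x) ∂μ

/-- Membership in the anisotropic homogeneous Orlicz–Sobolev space `V₀^{1,Φ}(Ω)`. -/
def MemV01Phi {n : ℕ} (Φ : YoungFunctionN n) (Ω : Set (En n)) (u : En n → ℝ)
    (V : En n → En n) : Prop :=
  IsWeakGradOn (Set.univ) (hatFn Ω u) V ∧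
  (AEMeasurable V volume ∧ ∃ lam : ℝ≥0, 0 < lam ∧ modularV Φ volume lam V < ⊤) ∧
  ∀ t : ℝ, 0 < t → volume {x : En n | t < |hatFn Ω u x|} < ⊤

/-- Modular convergence of gradients in `V₀^{1,Φ}(Ω)` with constant `lam`. -/
def ModConvV0Phi {n : ℕ} (Φ : YoungFunctionN n) (lam : ℝ≥0)
    (V : ℕ → En n → En n) (V₀ : En n → En n) : Prop :=
  Tendsto (fun k => modularV Φ volume lam (fun x => V k x - V₀ x)) atTop (𝓝 0)

/-- `T_f` maps `V₀^{1,Φ}(Ω)` into `V₀^{1,Ψ}(Ω)` and is continuous in the modular topology. -/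
def MapsModContV0Phi {n : ℕ} (Φ Ψ : YoungFunctionN n) (Ω : Set (En n)) (f : ℝ → ℝ) : Prop :=
  (∀ u V, MemV01Phi Φ Ω u V → ∃ W, MemV01Phi Ψ Ω (fun x => f (u x)) W) ∧
  ∀ (u : ℕ → En n → ℝ) (V : ℕ → En n → En n) (u₀ : En n → ℝ) (V₀ : En n → En n),
    (∀ k, MemV01Phi Φ Ω (u k) (V k)) → MemV01Phi Φ Ω u₀ V₀ →
    (∃ lam : ℝ≥0, 0 < lam ∧ ModConvV0Phi Φ lam V V₀) →
    ∃ (W : ℕ → En n → En n) (W₀ : En n → En n),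
      (∀ k, MemV01Phi Ψ Ω (fun x => f (u k x)) (W k)) ∧
      MemV01Phi Ψ Ω (fun x => f (u₀ x)) W₀ ∧
      ∃ lam : ℝ≥0, 0 < lam ∧ ModConvV0Phi Ψ lam W W₀

/-- `Φo` is the radial "average in measure" `Φ_∘` of the `n`-dimensional Young function `Φ`. -/
def IsCircAvg {n : ℕ} (Φ : YoungFunctionN n) (Φo : ℝ≥0 → ℝ≥0∞) : Prop :=
  ∀ t : ℝ≥0∞, volume {ξ : En n | Φo ‖ξ‖₊ ≤ t} = volume {ξ : En n | Φ.toFun ξ ≤ t}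

/-! ### One-dimensional versions -/

/-- `V` is the weak derivative of `u` on the open set `Ω ⊆ ℝ`. -/
def IsWeakDerivOn (Ω : Set ℝ) (u V : ℝ → ℝ) : Prop :=
  LocallyIntegrableOn u Ω volume ∧ LocallyIntegrableOn V Ω volume ∧
  ∀ φ : ℝ → ℝ, ContDiff ℝ (⊤ : ℕ∞) φ → HasCompactSupport φ → tsupport φ ⊆ Ω →
    (∫ x in Ω, u x * deriv φ x) = - ∫ x in Ω, V x * φ x

/-- Membership in `W^{1,A}(Ω)` for `Ω ⊆ ℝ`. -/
def MemW1A1 (A : ℝ≥0 → ℝ≥0∞) (Ω : Set ℝ) (u V : ℝ → ℝ) : Prop :=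
  IsWeakDerivOn Ω u V ∧ MemLA A (volume.restrict Ω) u ∧ MemLA A (volume.restrict Ω) V

/-- Extension by zero, one-dimensional case. -/
def hatFn1 (Ω : Set ℝ) (u : ℝ → ℝ) : ℝ → ℝ := Ω.indicator u

/-- Membership in `V₀^{1,A}(Ω)` for `Ω ⊆ ℝ`. -/
def MemV011 (A : ℝ≥0 → ℝ≥0∞) (Ω : Set ℝ) (u V : ℝ → ℝ) : Prop :=
  IsWeakDerivOn (Set.univ) (hatFn1 Ω u) V ∧ MemLA A volume V ∧
  ∀ t : ℝ, 0 < t → volume {x : ℝ | t < |hatFn1 Ω u x|} < ⊤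

/-- Modular convergence in `W^{1,A}(Ω)`, `Ω ⊆ ℝ`, with constant `lam`. -/
def ModConvW1R (A : ℝ≥0 → ℝ≥0∞) (Ω : Set ℝ) (lam : ℝ≥0)
    (u V : ℕ → ℝ → ℝ) (u₀ V₀ : ℝ → ℝ) : Prop :=
  Tendsto (fun k => modular A (volume.restrict Ω) lam (fun x => u k x - u₀ x)) atTop (𝓝 0) ∧
  Tendsto (fun k => modular A (volume.restrict Ω) lam (fun x => V k x - V₀ x)) atTop (𝓝 0)

/-- Modular convergence of derivatives in `V₀^{1,A}(Ω)`, `Ω ⊆ ℝ`, with constant `lam`. -/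
def ModConvV0R (A : ℝ≥0 → ℝ≥0∞) (lam : ℝ≥0) (V : ℕ → ℝ → ℝ) (V₀ : ℝ → ℝ) : Prop :=
  Tendsto (fun k => modular A volume lam (fun x => V k x - V₀ x)) atTop (𝓝 0)

/-- `T_f` maps `W^{1,A}(Ω)` into `W^{1,B}(Ω)` continuously in the modular topology, `Ω ⊆ ℝ`. -/
def MapsModContR (A B : ℝ≥0 → ℝ≥0∞) (Ω : Set ℝ) (f : ℝ → ℝ) : Prop :=
  (∀ u V, MemW1A1 A Ω u V → ∃ W, MemW1A1 B Ω (fun x => f (u x)) W) ∧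
  ∀ (u V : ℕ → ℝ → ℝ) (u₀ V₀ : ℝ → ℝ),
    (∀ k, MemW1A1 A Ω (u k) (V k)) → MemW1A1 A Ω u₀ V₀ →
    (∃ lam : ℝ≥0, 0 < lam ∧ ModConvW1R A Ω lam u V u₀ V₀) →
    ∃ (W : ℕ → ℝ → ℝ) (W₀ : ℝ → ℝ),
      (∀ k, MemW1A1 B Ω (fun x => f (u k x)) (W k)) ∧
      MemW1A1 B Ω (fun x => f (u₀ x)) W₀ ∧
      ∃ lam : ℝ≥0, 0 < lam ∧
        ModConvW1R B Ω lam (fun k x => f (u k x)) W (fun x => f (u₀ x)) W₀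

/-- `T_f` maps `V₀^{1,A}(Ω)` into `V₀^{1,B}(Ω)` continuously in the modular topology, `Ω ⊆ ℝ`. -/
def MapsModContV0R (A B : ℝ≥0 → ℝ≥0∞) (Ω : Set ℝ) (f : ℝ → ℝ) : Prop :=
  (∀ u V, MemV011 A Ω u V → ∃ W, MemV011 B Ω (fun x => f (u x)) W) ∧
  ∀ (u V : ℕ → ℝ → ℝ) (u₀ V₀ : ℝ → ℝ),
    (∀ k, MemV011 A Ω (u k) (V k)) → MemV011 A Ω u₀ V₀ →
    (∃ lam : ℝ≥0, 0 < lam ∧ ModConvV0R A lam V V₀) →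
    ∃ (W : ℕ → ℝ → ℝ) (W₀ : ℝ → ℝ),
      (∀ k, MemV011 B Ω (fun x => f (u k x)) (W k)) ∧
      MemV011 B Ω (fun x => f (u₀ x)) W₀ ∧
      ∃ lam : ℝ≥0, 0 < lam ∧ ModConvV0R B lam W W₀



section Aux

lemma youngAux_smul_le (A : YoungFunction) {u v : ℝ≥0} (huv : u ≤ v) (hv : v ≠ 0) :
    A.toFun u ≤ ((u / v : ℝ≥0) : ℝ≥0∞) * A.toFun v := by
  have hle : u / v ≤ 1 := by
    rw [div_le_one (zero_lt_iff.2 hv)]; exact huv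
  have h := A.convex' v 0 (u / v) (1 - u / v) (add_tsub_cancel_of_le hle)
  rw [div_mul_cancel₀ _ hv] at h
  simpa [A.map_zero'] using h

lemma youngAux_mono (A : YoungFunction) : Monotone A.toFun := by
  intro u v huv
  rcases eq_or_ne v 0 with rfl | hv
  · have : u = 0 := le_antisymm huv zero_le
    simp [this]
  · calc A.toFun u ≤ ((u / v : ℝ≥0) : ℝ≥0∞) * A.toFun v := youngAux_smul_le A huv hv
      _ ≤ 1 * A.toFun v := by
          apply mul_le_mul_left
          exact_mod_cast (div_le_one (zero_lt_iff.2 hv)).2 huv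
      _ = A.toFun v := one_mul _

end Aux

/-- If `B(t E(H_n(t))) ≤ A(t)` for `t ≥ t₀`, then there is a constant `c`
with `B(E(s) t / 2) ≤ c + A_n(s) + A(t)` for all `s, t > 0`. -/
theorem young_inequality_with_sobolev_conjugate
    (n : ℕ) (hn : 2 ≤ n) (A B : YoungFunction)
    (hAfin : ∀ t : ℝ≥0, A.toFun t ≠ ⊤)
    (hA0 : ConvAtZero (⇑A) n) (hAinf : DivAtTop (⇑A) n)
    (E : ℝ≥0 → ℝ≥0) (hE : Monotone E)
    (t₀ : ℝ≥0)
    (hBA : ∀ t : ℝ≥0, t₀ ≤ t →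
      B.toFun (t * E (Real.toNNReal (Hn (⇑A) n (t : ℝ)))) ≤ A.toFun t) :
    ∃ c : ℝ≥0, ∀ s t : ℝ≥0, 0 < s → 0 < t →
      B.toFun (E s * t / 2) ≤ (c : ℝ≥0∞) + SobConj (⇑A) n s + A.toFun t := by
  classical
  have hσ1 : (1:ℝ) < (n:ℝ) := by exact_mod_cast Nat.lt_of_lt_of_le Nat.one_lt_two hn
  have hσ0 : (0:ℝ) < (n:ℝ) := lt_trans one_pos hσ1
  have hσs : (0:ℝ) < (n:ℝ) - 1 := by linarith
  set σ : ℝ := (n : ℝ) with hσdef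
  set p : ℝ := (σ - 1) / σ with hpdef
  set q : ℝ := σ / (σ - 1) with hqdef
  have hp : 0 < p := div_pos hσs hσ0
  have hq : 0 < q := div_pos hσ0 hσs
  have hpq : p * q = 1 := by rw [hpdef, hqdef]; field_simp
  have hqp : q * p = 1 := by rw [mul_comm]; exact hpq
  have hAmono : Monotone A.toFun := youngAux_mono A
  have hexp : (0:ℝ) ≤ 1 / (σ - 1) := by positivity
  -- the integrand is antitone on (0, ∞)
  have hanti : ∀ x y : ℝ, 0 < x → x ≤ y → integrandA (⇑A) σ y ≤ integrandA (⇑A) σ x := by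
    intro x y hx hxy
    unfold integrandA
    apply ENNReal.rpow_le_rpow ?_ hexp
    have hy : 0 < y := lt_of_lt_of_le hx hxy
    set a := x.toNNReal with ha
    set b := y.toNNReal with hb
    have ha0 : a ≠ 0 := by
      rw [ha]; exact (Real.toNNReal_pos.2 hx).ne'
    have hab : a ≤ b := Real.toNNReal_mono hxy
    rw [show ENNReal.ofReal x = (a : ℝ≥0∞) from rfl, show ENNReal.ofReal y = (b : ℝ≥0∞) from rfl]
    rcases eq_or_ne (A.toFun a) 0 with hAa0 | hAa0
    · rw [hAa0, ENNReal.div_zero (by exact_mod_cast ha0)]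
      exact le_top
    · have hb0 : b ≠ 0 := fun h => ha0 (le_antisymm (h ▸ hab) zero_le)
      have hAb0 : A.toFun b ≠ 0 := fun h => hAa0 (le_antisymm (h ▸ hAmono hab) zero_le)
      rw [ENNReal.div_le_iff_le_mul (Or.inl hAb0) (Or.inl (hAfin b)),
        div_eq_mul_inv, mul_right_comm, ← div_eq_mul_inv,
        ENNReal.le_div_iff_mul_le (Or.inl hAa0) (Or.inl (hAfin a))]
      calc (b : ℝ≥0∞) * A.toFun a
          ≤ (b : ℝ≥0∞) * (((a / b : ℝ≥0) : ℝ≥0∞) * A.toFun b) := by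
            exact mul_le_mul_right (youngAux_smul_le A hab hb0) _
        _ = (a : ℝ≥0∞) * A.toFun b := by
            rw [ENNReal.coe_div hb0, ← mul_assoc,
              ENNReal.mul_div_cancel (by exact_mod_cast hb0) ENNReal.coe_ne_top]
  have hmeasI : Measurable (integrandA (⇑A) σ) := by
    unfold integrandA
    exact (ENNReal.measurable_ofReal.div
      (hAmono.measurable.comp measurable_real_toNNReal)).pow_const _
  set F : ℝ → ℝ≥0∞ := fun r => ∫⁻ u in Set.Ioo 0 r, integrandA (⇑A) σ u with hFdef
  have hHn : ∀ r : ℝ, Hn (⇑A) σ r = ((F r) ^ p).toReal := fun r => rfl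
  -- finiteness of F
  obtain ⟨c0, hc0, hc0fin⟩ := hA0
  have hptfin : ∃ u : ℝ, 0 < u ∧ u < c0 ∧ integrandA (⇑A) σ u ≠ ⊤ := by
    by_contra h
    push_neg at h
    have hall : ∀ u ∈ Set.Ioo (0:ℝ) c0, integrandA (⇑A) σ u = ⊤ :=
      fun u hu => h u hu.1 hu.2
    have htop : (∫⁻ u in Set.Ioo 0 c0, integrandA (⇑A) σ u) = ⊤ := by
      have h1 : (∫⁻ u in Set.Ioo (0:ℝ) c0, integrandA (⇑A) σ u)
          = ∫⁻ _ in Set.Ioo (0:ℝ) c0, (⊤:ℝ≥0∞) :=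
        setLIntegral_congr_fun measurableSet_Ioo (fun u hu => hall u hu)
      rw [h1, setLIntegral_const, Real.volume_Ioo, ENNReal.top_mul]
      simp only [sub_zero, ne_eq, ENNReal.ofReal_eq_zero, not_le]
      exact hc0
    rw [htop] at hc0fin
    exact lt_irrefl _ hc0fin
  obtain ⟨u0, hu0pos, hu0lt, hu0fin⟩ := hptfin
  have hFfin : ∀ r : ℝ, F r ≠ ⊤ := by
    intro r
    rcases le_or_gt r c0 with hr | hr
    · exact ne_top_of_le_ne_top hc0fin.ne
        (lintegral_mono_set (Set.Ioo_subset_Ioo le_rfl hr))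
    · have hsub : Set.Ioo (0:ℝ) r ⊆ Set.Ioo 0 c0 ∪ Set.Icc c0 r := by
        intro x hx
        rcases lt_or_ge x c0 with hxc | hxc
        · exact Or.inl ⟨hx.1, hxc⟩
        · exact Or.inr ⟨hxc, hx.2.le⟩
      have h1 : F r ≤ (∫⁻ u in Set.Ioo (0:ℝ) c0, integrandA (⇑A) σ u)
          + ∫⁻ u in Set.Icc c0 r, integrandA (⇑A) σ u :=
        le_trans (lintegral_mono_set hsub) (lintegral_union_le _ _ _)
      have h2 : (∫⁻ u in Set.Icc c0 r, integrandA (⇑A) σ u)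
          ≤ integrandA (⇑A) σ u0 * volume (Set.Icc c0 r) := by
        rw [← setLIntegral_const]
        exact setLIntegral_mono' measurableSet_Icc
          fun x hx => hanti u0 x hu0pos (le_trans hu0lt.le hx.1)
      have h3 : integrandA (⇑A) σ u0 * volume (Set.Icc c0 r) ≠ ⊤ := by
        apply ENNReal.mul_ne_top hu0fin
        rw [Real.volume_Icc]
        exact ENNReal.ofReal_ne_top
      exact ne_top_of_le_ne_top (ENNReal.add_ne_top.2 ⟨hc0fin.ne, ne_top_of_le_ne_top h3 h2⟩) h1
  have hFmono : ∀ ⦃r1 r2 : ℝ⦄, r1 ≤ r2 → F r1 ≤ F r2 := fun r1 r2 h =>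
    lintegral_mono_set (Set.Ioo_subset_Ioo le_rfl h)
  have hHmono : ∀ ⦃r1 r2 : ℝ⦄, r1 ≤ r2 → Hn (⇑A) σ r1 ≤ Hn (⇑A) σ r2 := by
    intro r1 r2 h
    rw [hHn, hHn]
    exact ENNReal.toReal_mono (ENNReal.rpow_ne_top_of_nonneg hp.le (hFfin r2))
      (ENNReal.rpow_le_rpow (hFmono h) hp.le)
  have hiff : ∀ (s : ℝ≥0) (r : ℝ), (s:ℝ) ≤ Hn (⇑A) σ r ↔ ((s:ℝ≥0∞)) ^ q ≤ F r := by
    intro s r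
    rw [hHn]
    constructor
    · intro h
      have h1 : (s:ℝ≥0∞) ≤ (F r) ^ p := by
        rw [← ENNReal.ofReal_coe_nnreal]
        exact ENNReal.ofReal_le_of_le_toReal h
      calc (s:ℝ≥0∞) ^ q ≤ ((F r) ^ p) ^ q := ENNReal.rpow_le_rpow h1 hq.le
        _ = F r := by rw [← ENNReal.rpow_mul, hpq, ENNReal.rpow_one]
    · intro h
      have h1 : (s:ℝ≥0∞) ≤ (F r) ^ p := by
        calc (s:ℝ≥0∞) = ((s:ℝ≥0∞) ^ q) ^ p := by
              rw [← ENNReal.rpow_mul, hqp, ENNReal.rpow_one]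
          _ ≤ (F r) ^ p := ENNReal.rpow_le_rpow h hp.le
      have h2 := ENNReal.toReal_mono
        (ENNReal.rpow_ne_top_of_nonneg hp.le (hFfin r)) h1
      simpa using h2
  set μ : Measure ℝ := volume.withDensity (integrandA (⇑A) σ) with hμdef
  have hμIco : ∀ a b : ℝ, μ (Set.Ico a b) = ∫⁻ u in Set.Ico a b, integrandA (⇑A) σ u :=
    fun a b => withDensity_apply _ measurableSet_Ico
  -- key fact : the infimum belongs to the set
  have hkey : ∀ s : ℝ≥0, ({r : ℝ | 0 ≤ r ∧ (s:ℝ) ≤ Hn (⇑A) σ r}).Nonempty →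
      0 ≤ sInf {r : ℝ | 0 ≤ r ∧ (s:ℝ) ≤ Hn (⇑A) σ r} ∧
      (s:ℝ) ≤ Hn (⇑A) σ (sInf {r : ℝ | 0 ≤ r ∧ (s:ℝ) ≤ Hn (⇑A) σ r}) := by
    intro s hne
    set S := {r : ℝ | 0 ≤ r ∧ (s:ℝ) ≤ Hn (⇑A) σ r} with hSdef
    have hbdd : BddBelow S := ⟨0, fun r hr => hr.1⟩
    set τ := sInf S with hτdef
    have hτ0 : 0 ≤ τ := le_csInf hne fun r hr => hr.1
    refine ⟨hτ0, ?_⟩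
    rw [hiff]
    have hmono_sets : Antitone (fun k : ℕ => Set.Ico τ (τ + 1/(k+1))) := by
      intro i j hij
      apply Set.Ico_subset_Ico le_rfl
      have h1 : (1:ℝ)/((j:ℝ)+1) ≤ 1/((i:ℝ)+1) := by
        apply one_div_le_one_div_of_le (by positivity)
        have : (i:ℝ) ≤ (j:ℝ) := by exact_mod_cast hij
        linarith
      linarith
    have hInter : (⋂ k : ℕ, Set.Ico τ (τ + 1/(k+1))) = {τ} := by
      ext x
      simp only [Set.mem_iInter, Set.mem_Ico, Set.mem_singleton_iff]
      constructor
      · intro h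
        refine le_antisymm ?_ (h 0).1
        by_contra hx
        push_neg at hx
        obtain ⟨k, hk⟩ := exists_nat_one_div_lt (sub_pos.2 hx)
        have := (h k).2
        linarith
      · rintro rfl
        intro k
        refine ⟨le_rfl, lt_add_of_pos_right _ (by positivity)⟩
    have hμfin : μ (Set.Ico τ (τ + 1/((0:ℕ)+1))) ≠ ⊤ := by
      rw [hμIco]
      have hsub : Set.Ico τ (τ + 1/((0:ℕ)+1)) ⊆ Set.Ioo 0 (τ + 1) ∪ {τ} := by
        intro x hx
        rcases eq_or_lt_of_le hx.1 with hxe | hxl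
        · exact Or.inr (by simp [hxe.symm])
        · refine Or.inl ⟨lt_of_le_of_lt hτ0 hxl, ?_⟩
          have := hx.2
          norm_num at this ⊢
          linarith
      have hz : (∫⁻ u in ({τ} : Set ℝ), integrandA (⇑A) σ u) = 0 :=
        setLIntegral_measure_zero _ _ Real.volume_singleton
      refine ne_top_of_le_ne_top ?_
        (le_trans (lintegral_mono_set hsub) (lintegral_union_le _ _ _))
      rw [hz, add_zero]
      exact hFfin (τ + 1)
    have hlim := tendsto_measure_iInter_atTop
      (fun k => measurableSet_Ico.nullMeasurableSet) hmono_sets ⟨0, hμfin⟩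
    rw [hInter] at hlim
    have hμτ : μ {τ} = 0 := by
      rw [withDensity_apply _ (measurableSet_singleton τ)]
      exact setLIntegral_measure_zero _ _ Real.volume_singleton
    rw [hμτ] at hlim
    have hbound : ∀ k : ℕ, (s:ℝ≥0∞) ^ q ≤ F τ + μ (Set.Ico τ (τ + 1/(k+1))) := by
      intro k
      have hlt : τ < τ + 1/((k:ℝ)+1) := lt_add_of_pos_right _ (by positivity)
      obtain ⟨r, hrS, hrlt⟩ := (csInf_lt_iff hbdd hne).1 hlt
      have h1 : (s:ℝ≥0∞) ^ q ≤ F r := (hiff s r).1 hrS.2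
      have hsub : Set.Ioo 0 r ⊆ Set.Ioo 0 τ ∪ Set.Ico τ (τ + 1/(k+1)) := by
        intro x hx
        rcases lt_or_ge x τ with hxl | hxl
        · exact Or.inl ⟨hx.1, hxl⟩
        · exact Or.inr ⟨hxl, hx.2.trans hrlt⟩
      calc (s:ℝ≥0∞) ^ q ≤ F r := h1
        _ ≤ F τ + ∫⁻ u in Set.Ico τ (τ + 1/(k+1)), integrandA (⇑A) σ u :=
          le_trans (lintegral_mono_set hsub) (lintegral_union_le _ _ _)
        _ = F τ + μ (Set.Ico τ (τ + 1/(k+1))) := by rw [hμIco]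
    have htend : Filter.Tendsto (fun k : ℕ => F τ + μ (Set.Ico τ (τ + 1/(k+1))))
        Filter.atTop (nhds (F τ + 0)) := Filter.Tendsto.const_add _ hlim
    rw [add_zero] at htend
    exact ge_of_tendsto' htend hbound
  -- conclusion
  refine ⟨(A.toFun t₀).toNNReal, ?_⟩
  intro s t hs ht
  have hcoe : (((A.toFun t₀).toNNReal : ℝ≥0∞)) = A.toFun t₀ := ENNReal.coe_toNNReal (hAfin t₀)
  by_cases hne : ({r : ℝ | 0 ≤ r ∧ (s:ℝ) ≤ Hn (⇑A) σ r}).Nonempty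
  · obtain ⟨hτ0, hτH⟩ := hkey s hne
    set τ := sInf {r : ℝ | 0 ≤ r ∧ (s:ℝ) ≤ Hn (⇑A) σ r} with hτdef
    have hSob : SobConj (⇑A) σ s = A.toFun (Real.toNNReal τ) := by
      rw [SobConj, if_pos hne]
    set ρ : ℝ := max τ (t₀:ℝ) with hρdef
    have hρ0 : 0 ≤ ρ := le_trans hτ0 (le_max_left _ _)
    have hρτ : τ ≤ ρ := le_max_left _ _
    have hρt₀ : t₀ ≤ ρ.toNNReal := by
      rw [show t₀ = ((t₀:ℝ)).toNNReal from (Real.toNNReal_coe).symm]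
      exact Real.toNNReal_mono (le_max_right _ _)
    have hBmono := youngAux_mono B
    rw [hSob, hcoe]
    rcases le_or_gt (t:ℝ) ρ with hcase | hcase
    · have hsH : (s:ℝ) ≤ Hn (⇑A) σ ρ := hτH.trans (hHmono hρτ)
      have hEs : E s ≤ E (Real.toNNReal (Hn (⇑A) σ ρ)) := by
        apply hE
        rw [show s = ((s:ℝ)).toNNReal from (Real.toNNReal_coe).symm]
        exact Real.toNNReal_mono hsH
      have htρ : t ≤ ρ.toNNReal := by
        rw [show t = ((t:ℝ)).toNNReal from (Real.toNNReal_coe).symm]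
        exact Real.toNNReal_mono hcase
      have harg : E s * t / 2 ≤ ρ.toNNReal * E (Real.toNNReal (Hn (⇑A) σ ((ρ.toNNReal : ℝ)))) := by
        rw [Real.coe_toNNReal _ hρ0]
        calc E s * t / 2 ≤ E (Real.toNNReal (Hn (⇑A) σ ρ)) * ρ.toNNReal := by
              rw [mul_div_assoc]
              exact mul_le_mul' hEs (le_trans (div_le_self zero_le one_le_two) htρ)
          _ = ρ.toNNReal * E (Real.toNNReal (Hn (⇑A) σ ρ)) := mul_comm _ _
      have hstep := (hBmono harg).trans (hBA ρ.toNNReal hρt₀)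
      refine hstep.trans ?_
      rcases max_cases τ ((t₀:ℝ)) with ⟨hmax, _⟩ | ⟨hmax, _⟩
      · rw [hρdef, hmax]
        exact le_add_right (le_add_left le_rfl)
      · rw [hρdef, hmax, Real.toNNReal_coe]
        exact le_add_right (le_add_right le_rfl)
    · have ht₀t : t₀ ≤ t := by
        have h1 : (t₀:ℝ) ≤ (t:ℝ) := le_trans (le_max_right τ _) hcase.le
        exact_mod_cast h1
      have hsH : (s:ℝ) ≤ Hn (⇑A) σ ((t:ℝ)) := hτH.trans (hHmono (hρτ.trans hcase.le))
      have hEs : E s ≤ E (Real.toNNReal (Hn (⇑A) σ ((t:ℝ)))) := by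
        apply hE
        rw [show s = ((s:ℝ)).toNNReal from (Real.toNNReal_coe).symm]
        exact Real.toNNReal_mono hsH
      have harg : E s * t / 2 ≤ t * E (Real.toNNReal (Hn (⇑A) σ ((t:ℝ)))) := by
        calc E s * t / 2 ≤ E (Real.toNNReal (Hn (⇑A) σ ((t:ℝ)))) * t := by
              rw [mul_div_assoc]
              exact mul_le_mul' hEs (div_le_self zero_le one_le_two)
          _ = t * E (Real.toNNReal (Hn (⇑A) σ ((t:ℝ)))) := mul_comm _ _
      exact le_trans ((hBmono harg).trans (hBA t ht₀t)) (le_add_left le_rfl)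
  · have hSob : SobConj (⇑A) σ s = ⊤ := by
      rw [SobConj, if_neg hne]
    rw [hSob]
    simp

end
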